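/- arXiv:1805.02736 — 2 statements merged into one kernel-verified Lean document; each statement's English description precedes it below -/
import Mathlib

section
/- Let a be a self-adjoint element of a unital C*-algebra A and let f : ℝ → ℂ be a Schwartz function. Then the continuous functional calculus f(a) equals the Bochner integral (2π)^{−1/2} ∫_ℝ f̂(t) e^{ita} dt, where f̂(t) = (2π)^{−1/2} ∫_ℝ f(x) e^{−itx} dx is the Fourier transform of f. -/
open MeasureTheory

/-!
Fourier inversion writes `f x = (2π)^{-1/2} ∫ f̂(t) e^{itx} dt` for real `x`, and the spectrum of
a self-adjoint element is real, so `z ↦ f z.re` agrees on the spectrum with the integral of the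
functions `z ↦ f̂(t) e^{itz}`. These are bounded there by `|f̂(t)|`, which is integrable, so the
continuous functional calculus commutes with the integral; finally the calculus sends
`z ↦ e^{itz}` to the exponential of `ita`.
-/

open FourierTransform Complex

noncomputable def unitaryFourier (f : ℝ → ℂ) (t : ℝ) : ℂ :=
  ((√(2 * Real.pi) : ℝ) : ℂ)⁻¹ * ∫ x : ℝ, f x * Complex.exp (-(I * t * x))

theorem unitaryFourier_eq_fourier (f : ℝ → ℂ) (t : ℝ) :
    unitaryFourier f t = ((√(2 * Real.pi) : ℝ) : ℂ)⁻¹ * 𝓕 f (t / (2 * Real.pi)) := by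
  rw [unitaryFourier, Real.fourier_real_eq_integral_exp_smul]
  congr 1
  refine integral_congr_ae (.of_forall fun x => ?_)
  have h_phase : -2 * Real.pi * x * (t / (2 * Real.pi)) = -(t * x) := by field_simp
  simp only [smul_eq_mul, h_phase]
  push_cast
  ring_nf

theorem SchwartzMap.continuous_unitaryFourier (f : SchwartzMap ℝ ℂ) :
    Continuous (unitaryFourier f) := by
  simp_rw [funext (unitaryFourier_eq_fourier f), ← SchwartzMap.fourier_coe]
  fun_prop

theorem SchwartzMap.integrable_unitaryFourier (f : SchwartzMap ℝ ℂ) :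
    Integrable (unitaryFourier f) := by
  simp_rw [funext (unitaryFourier_eq_fourier f), ← SchwartzMap.fourier_coe]
  exact ((𝓕 f).integrable.comp_div (by positivity)).const_mul _

theorem unitaryFourier_inversion {f : ℝ → ℂ} (hf : Continuous f) (hf_int : Integrable f)
    (hFf : Integrable (𝓕 f)) (x : ℝ) :
    ((√(2 * Real.pi) : ℝ) : ℂ)⁻¹ * ∫ t : ℝ, unitaryFourier f t * Complex.exp ((t : ℂ) * I * x) =
      f x := by
  have h2π : 0 < 2 * Real.pi := by positivity
  set H : ℝ → ℂ := fun t => 𝓕 f (t / (2 * Real.pi)) * Complex.exp ((t : ℂ) * I * x)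
  have hH_dilate : ∫ ξ, H (2 * Real.pi * ξ) = f x := by
    rw [← hf.fourierInv_fourier_eq hf_int hFf, Real.fourierInv_eq']
    refine integral_congr_ae (.of_forall fun ξ => ?_)
    simp only [H, smul_eq_mul, mul_div_cancel_left₀ ξ h2π.ne', RCLike.inner_apply', conj_trivial]
    push_cast
    ring_nf
  have hH : ∫ t, H t = 2 * Real.pi * f x := by
    rw [← hH_dilate, Measure.integral_comp_mul_left H (2 * Real.pi), abs_of_pos (inv_pos.2 h2π),
      Complex.real_smul]
    push_cast
    field_simp
  have hc : ((√(2 * Real.pi) : ℝ) : ℂ)⁻¹ * ((√(2 * Real.pi) : ℝ) : ℂ)⁻¹ =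
      ((2 * Real.pi : ℝ) : ℂ)⁻¹ := by
    rw [← mul_inv, ← ofReal_mul, Real.mul_self_sqrt h2π.le]
  simp_rw [unitaryFourier_eq_fourier, mul_assoc ((√(2 * Real.pi) : ℝ) : ℂ)⁻¹, integral_const_mul]
  rw [← mul_assoc, hc, hH]
  push_cast
  field_simp

theorem cfc_exp_const_mul {A : Type*} [CStarAlgebra A] (a : A) [IsStarNormal a] (c : ℂ) :
    cfc (fun z : ℂ => Complex.exp (c * z)) a = NormedSpace.exp (c • a) := by
  rw [cfc_comp_const_mul c exp a, Complex.exp_eq_exp_ℂ, CFC.exp_eq_normedSpace_exp]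

theorem IsSelfAdjoint.norm_exp_mul_I_mul_of_mem_spectrum {A : Type*} [CStarAlgebra A] {a : A}
    (ha : IsSelfAdjoint a) (t : ℝ) {z : ℂ} (hz : z ∈ spectrum ℂ a) :
    ‖Complex.exp ((t : ℂ) * I * z)‖ = 1 := by
  have h_real : (t : ℂ) * I * z.re = ((t * z.re : ℝ) : ℂ) * I := by push_cast; ring
  rw [ha.mem_spectrum_eq_re hz, h_real, norm_exp_ofReal_mul_I]

theorem IsSelfAdjoint.cfc_integral_mul_exp {A : Type*} [CStarAlgebra A] {a : A}
    (ha : IsSelfAdjoint a) {g : ℝ → ℂ} (hg : Continuous g) (hg_int : Integrable g) :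
    cfc (fun z : ℂ => ∫ t : ℝ, g t * Complex.exp ((t : ℂ) * I * z)) a =
      ∫ t : ℝ, g t • NormedSpace.exp (((t : ℂ) * I) • a) := by
  have := ha.isStarNormal
  rw [cfc_integral (fun (t : ℝ) (z : ℂ) => g t * Complex.exp ((t : ℂ) * I * z))
    (fun t => ‖g t‖) a (by fun_prop : Continuous _).continuousOn ?_ hg_int.norm.hasFiniteIntegral]
  · refine integral_congr_ae (.of_forall fun t => ?_)
    dsimp only
    rw [cfc_const_mul (g t) (fun z => Complex.exp ((t : ℂ) * I * z)) a, cfc_exp_const_mul]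
  · refine .of_forall fun t z hz => ?_
    rw [norm_mul, ha.norm_exp_mul_I_mul_of_mem_spectrum t hz, mul_one]

/-- Let `a` be a self-adjoint element of a unital C*-algebra `A` and let `f : ℝ → ℂ` be a
Schwartz function.  Then the continuous functional calculus `f(a)` equals the Bochner integral
`(2π)^{−1/2} ∫_ℝ f̂(t) e^{ita} dt`, where `f̂(t) = (2π)^{−1/2} ∫_ℝ f(x) e^{−itx} dx` is the
Fourier transform of `f`. -/
theorem cfc_eq_fourier_integral_exp {A : Type*} [CStarAlgebra A]
    (a : A) (ha : IsSelfAdjoint a) (f : SchwartzMap ℝ ℂ) :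
    cfc (fun z : ℂ => f z.re) a =
      ((Real.sqrt (2 * Real.pi) : ℂ))⁻¹ •
        ∫ t : ℝ,
          (((Real.sqrt (2 * Real.pi) : ℂ))⁻¹ *
              ∫ x : ℝ, f x * Complex.exp (-(Complex.I * t * x))) •
            NormedSpace.exp (((t : ℂ) * Complex.I) • a) := by
  set c : ℂ := ((√(2 * Real.pi) : ℝ) : ℂ)
  have h_inversion : ∀ z ∈ spectrum ℂ a,
      f z.re = ∫ t : ℝ, c⁻¹ * unitaryFourier f t * Complex.exp ((t : ℂ) * I * z) := by
    intro z hz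
    simp_rw [mul_assoc c⁻¹, integral_const_mul]
    nth_rw 2 [ha.mem_spectrum_eq_re hz]
    exact (unitaryFourier_inversion f.continuous f.integrable (𝓕 f).integrable z.re).symm
  rw [cfc_congr h_inversion, ha.cfc_integral_mul_exp (g := fun t => c⁻¹ * unitaryFourier f t)
    (continuous_const.mul f.continuous_unitaryFourier) (f.integrable_unitaryFourier.const_mul _),
    ← integral_smul]
  congr 1 with t
  exact mul_smul _ _ _
end

section
/- Let a be a self-adjoint element of a unital C*-algebra A. Then for every λ ∈ ℝ the element (1 + λ²)·1 + a² is invertible with ‖a·((1 + λ²)·1 + a²)^{−1}‖ ≤ 1/(2√(1 + λ²)), the Bochner integral (2/π) ∫₀^∞ a·((1 + λ²)·1 + a²)^{−1} dλ converges absolutely in norm, and it equals χ(a), the continuous functional calculus of a applied to the normalizing function χ(x) = x/√(1 + x²). -/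
/-!
For self-adjoint `a` and `c > 0`, the element `a * (c • 1 + a²)⁻¹` is `f(a)` for
`f x = x / (c + x²)`, so invertibility and the norm bound are statements about the spectrum
(where `|x| / (c + x²) ≤ 1 / (2√c)` by AM-GM). The scalar integrand is bounded on the spectrum by
`‖a‖ / (1 + λ²)`, which is integrable, so the functional calculus commutes with the integral and
the identity reduces to `∫₀^∞ dλ / (1 + x² + λ²) = π / (2√(1 + x²))`.
-/

open MeasureTheory Set Real

theorem integral_Ioi_inv_add_sq {b : ℝ} (hb : 0 < b) :
    ∫ t in Ioi (0 : ℝ), (b + t ^ 2)⁻¹ = π / (2 * √b) := by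
  have hs : 0 < √b := sqrt_pos.mpr hb
  have hsq : √b ^ 2 = b := sq_sqrt hb.le
  have hscale : ∀ t : ℝ, (b + t ^ 2)⁻¹ = b⁻¹ * (1 + (t * (√b)⁻¹) ^ 2)⁻¹ := fun t => by
    field_simp
    rw [hsq]
    ring
  simp_rw [hscale]
  rw [integral_const_mul,
    integral_comp_mul_right_Ioi (fun u => (1 + u ^ 2)⁻¹) 0 (inv_pos.mpr hs)]
  simp only [zero_mul, integral_Ioi_inv_one_add_sq, arctan_zero, sub_zero, inv_inv, smul_eq_mul]
  field_simp
  exact hsq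

theorem integral_Ioi_div_one_add_sq_add_sq (x : ℝ) :
    ∫ t in Ioi (0 : ℝ), x / (1 + t ^ 2 + x ^ 2) = π / 2 * (x / √(1 + x ^ 2)) := by
  have hrw : ∀ t : ℝ, x / (1 + t ^ 2 + x ^ 2) = x * ((1 + x ^ 2) + t ^ 2)⁻¹ := fun t => by
    rw [div_eq_mul_inv]
    ring_nf
  simp_rw [hrw]
  rw [integral_const_mul, integral_Ioi_inv_add_sq (by positivity)]
  field_simp

theorem norm_div_add_sq_le_one_div_two_mul_sqrt {c : ℝ} (hc : 0 < c) (x : ℝ) :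
    ‖x / (c + x ^ 2)‖ ≤ 1 / (2 * √c) := by
  have hsq : √c ^ 2 = c := sq_sqrt hc.le
  rw [norm_div, norm_of_nonneg (by positivity : 0 ≤ c + x ^ 2), norm_eq_abs,
    div_le_div_iff₀ (by positivity) (by positivity)]
  nlinarith [sq_nonneg (√c - |x|), sq_abs x]

theorem norm_div_add_sq_le_mul_inv {c r x : ℝ} (hc : 0 < c) (hx : ‖x‖ ≤ r) :
    ‖x / (c + x ^ 2)‖ ≤ r * c⁻¹ := by
  rw [norm_div, norm_of_nonneg (by positivity : 0 ≤ c + x ^ 2), ← div_eq_mul_inv]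
  exact div_le_div₀ ((norm_nonneg x).trans hx) hx hc (le_add_of_nonneg_right (sq_nonneg x))

theorem continuous_uncurry_div_one_add_sq_add_sq :
    Continuous (Function.uncurry fun t x : ℝ => x / (1 + t ^ 2 + x ^ 2)) :=
  continuous_snd.div (by fun_prop) fun _ => by positivity

namespace IsSelfAdjoint

variable {A : Type*} [CStarAlgebra A] {a : A}

theorem cfc_const_add_sq (ha : IsSelfAdjoint a) (c : ℝ) :
    cfc (fun x : ℝ => c + x ^ 2) a = c • (1 : A) + a ^ 2 := by
  rw [cfc_add (a := a) (fun _ => c) (fun x => x ^ 2), cfc_const c a, cfc_pow_id a 2,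
    Algebra.algebraMap_eq_smul_one]

theorem isUnit_smul_one_add_sq (ha : IsSelfAdjoint a) {c : ℝ} (hc : 0 < c) :
    IsUnit (c • (1 : A) + a ^ 2) := by
  rw [← ha.cfc_const_add_sq]
  exact (isUnit_cfc_iff _ a).mpr fun x _ => by positivity

theorem mul_inverse_smul_one_add_sq (ha : IsSelfAdjoint a) {c : ℝ} (hc : 0 < c) :
    a * Ring.inverse (c • (1 : A) + a ^ 2) = cfc (fun x : ℝ => x / (c + x ^ 2)) a := by
  rw [← ha.cfc_const_add_sq]
  nth_rewrite 1 [← cfc_id ℝ a]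
  exact (cfc_map_div id _ a fun x _ => by positivity).symm

theorem norm_mul_inverse_smul_one_add_sq_le (ha : IsSelfAdjoint a) {c : ℝ} (hc : 0 < c) :
    ‖a * Ring.inverse (c • (1 : A) + a ^ 2)‖ ≤ 1 / (2 * √c) := by
  rw [ha.mul_inverse_smul_one_add_sq hc]
  exact norm_cfc_le (by positivity) fun x _ => norm_div_add_sq_le_one_div_two_mul_sqrt hc x

theorem norm_div_one_add_sq_add_sq_le_of_mem_spectrum (ha : IsSelfAdjoint a) (t : ℝ) :
    ∀ x ∈ spectrum ℝ a, ‖x / (1 + t ^ 2 + x ^ 2)‖ ≤ ‖a‖ * (1 + t ^ 2)⁻¹ := fun _ hx =>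
  norm_div_add_sq_le_mul_inv (by positivity)
    (IsometricContinuousFunctionalCalculus.norm_spectrum_le a hx)

theorem integrableOn_cfc_div_one_add_sq_add_sq (ha : IsSelfAdjoint a) :
    IntegrableOn (fun t : ℝ => cfc (fun x : ℝ => x / (1 + t ^ 2 + x ^ 2)) a) (Ioi 0) :=
  integrableOn_cfc measurableSet_Ioi _ (fun t => ‖a‖ * (1 + t ^ 2)⁻¹) a
    continuous_uncurry_div_one_add_sq_add_sq.continuousOn
    (.of_forall ha.norm_div_one_add_sq_add_sq_le_of_mem_spectrum)
    (integrable_inv_one_add_sq.integrableOn.const_mul ‖a‖).hasFiniteIntegral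

theorem setIntegral_cfc_div_one_add_sq_add_sq (ha : IsSelfAdjoint a) :
    ∫ t in Ioi (0 : ℝ), cfc (fun x : ℝ => x / (1 + t ^ 2 + x ^ 2)) a =
      (π / 2) • cfc (fun x : ℝ => x / √(1 + x ^ 2)) a := by
  rw [← cfc_setIntegral measurableSet_Ioi _ (fun t => ‖a‖ * (1 + t ^ 2)⁻¹) a
      continuous_uncurry_div_one_add_sq_add_sq.continuousOn
      (.of_forall ha.norm_div_one_add_sq_add_sq_le_of_mem_spectrum)
      (integrable_inv_one_add_sq.integrableOn.const_mul ‖a‖).hasFiniteIntegral,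
    funext integral_Ioi_div_one_add_sq_add_sq,
    cfc_const_mul _ (fun x : ℝ => x / √(1 + x ^ 2)) a
      (continuous_id.div (by fun_prop) fun x => by positivity).continuousOn]

end IsSelfAdjoint

/-- Let `a` be a self-adjoint element of a unital C*-algebra `A`.  Then for every `λ ∈ ℝ` the
element `(1 + λ²)·1 + a²` is invertible with `‖a·((1 + λ²)·1 + a²)⁻¹‖ ≤ 1/(2√(1 + λ²))`, the
Bochner integral `(2/π) ∫₀^∞ a·((1 + λ²)·1 + a²)⁻¹ dλ` converges absolutely in norm, and it
equals `χ(a)`, the continuous functional calculus of `a` applied to the normalizing function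
`χ(x) = x/√(1 + x²)`. -/
theorem cfc_normalizing_function_integral_formula {A : Type*} [CStarAlgebra A]
    (a : A) (ha : IsSelfAdjoint a) :
    (∀ lam : ℝ, IsUnit ((1 + lam ^ 2) • (1 : A) + a ^ 2)) ∧
    (∀ lam : ℝ, ‖a * Ring.inverse ((1 + lam ^ 2) • (1 : A) + a ^ 2)‖ ≤
      1 / (2 * Real.sqrt (1 + lam ^ 2))) ∧
    IntegrableOn (fun lam : ℝ => a * Ring.inverse ((1 + lam ^ 2) • (1 : A) + a ^ 2))
      (Ioi 0) ∧
    cfc (fun x : ℝ => x / Real.sqrt (1 + x ^ 2)) a =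
      (2 / Real.pi) • ∫ lam in Ioi (0 : ℝ),
        a * Ring.inverse ((1 + lam ^ 2) • (1 : A) + a ^ 2) := by
  have hpos (lam : ℝ) : 0 < 1 + lam ^ 2 := by positivity
  have hcfc (lam : ℝ) : a * Ring.inverse ((1 + lam ^ 2) • (1 : A) + a ^ 2) =
      cfc (fun x : ℝ => x / (1 + lam ^ 2 + x ^ 2)) a :=
    ha.mul_inverse_smul_one_add_sq (hpos lam)
  refine ⟨fun lam => ha.isUnit_smul_one_add_sq (hpos lam),
    fun lam => ha.norm_mul_inverse_smul_one_add_sq_le (hpos lam), ?_, ?_⟩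
  · simpa only [hcfc] using ha.integrableOn_cfc_div_one_add_sq_add_sq
  · rw [funext hcfc, ha.setIntegral_cfc_div_one_add_sq_add_sq, smul_smul,
      div_mul_div_cancel₀ pi_ne_zero, div_self two_ne_zero, one_smul]
end
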